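/- arXiv:1905.08968 — 5 statements merged into one kernel-verified Lean document; each statement's English description precedes it below -/
import Mathlib

section
/- Let 0 < a < 1, let ρ > 0, and let U : [0, ρ] → ℝ be continuously differentiable. Then ∫₀^ρ (U(r) − U(ρ))² · r^(1−a) dr ≤ (4 / (2 − a)²) · ∫₀^ρ U′(r)² · r^(3−a) dr. -/
open MeasureTheory Real intervalIntegral

/-- Weighted Poincaré inequality from the proof of Proposition 3.8: for `0 < a < 1`, `ρ > 0`
and `U` continuously differentiable on `[0, ρ]`,
`∫₀^ρ (U(r) − U(ρ))² r^(1−a) dr ≤ (4/(2−a)²) ∫₀^ρ U′(r)² r^(3−a) dr`. -/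
theorem weighted_poincare (a ρ : ℝ) (ha0 : 0 < a) (ha1 : a < 1) (hρ : 0 < ρ)
    (U : ℝ → ℝ) (hU : ContDiffOn ℝ 1 U (Set.Icc 0 ρ)) :
    ∫ r in (0 : ℝ)..ρ, (U r - U ρ) ^ 2 * r ^ (1 - a) ≤
      (4 / (2 - a) ^ 2) * ∫ r in (0 : ℝ)..ρ, deriv U r ^ 2 * r ^ (3 - a) := by
  have h2a : (0:ℝ) < 2 - a := by linarith
  have h1a : (0:ℝ) < 1 - a := by linarith
  have h3a : (0:ℝ) < 3 - a := by linarith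
  set g : ℝ → ℝ := derivWithin U (Set.Icc 0 ρ) with hg_def
  set V : ℝ → ℝ := fun r => U r - U ρ with hV_def
  have huIcc : Set.uIcc (0:ℝ) ρ = Set.Icc 0 ρ := Set.uIcc_of_le hρ.le
  have hUc : ContinuousOn U (Set.Icc 0 ρ) := hU.continuousOn
  have hVc : ContinuousOn V (Set.Icc 0 ρ) := hUc.sub continuousOn_const
  have hgc : ContinuousOn g (Set.Icc 0 ρ) :=
    hU.continuousOn_derivWithin (uniqueDiffOn_Icc hρ) le_rfl
  have hd : ∀ r ∈ Set.Ioo 0 ρ, HasDerivAt U (g r) r := by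
    intro r hr
    have hmem : Set.Icc 0 ρ ∈ nhds r := Icc_mem_nhds hr.1 hr.2
    exact ((hU.differentiableOn one_ne_zero r (Set.Ioo_subset_Icc_self hr)).hasDerivWithinAt).hasDerivAt
      hmem
  have hrc : ∀ p : ℝ, 0 < p → ContinuousOn (fun r : ℝ => r ^ p) (Set.Icc 0 ρ) := by
    intro p hp x _
    exact (Real.continuousAt_rpow_const x p (Or.inr hp.le)).continuousWithinAt
  -- integrability helpers
  have hint : ∀ h : ℝ → ℝ, ContinuousOn h (Set.Icc 0 ρ) → IntervalIntegrable h volume 0 ρ := by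
    intro h hc
    exact (huIcc ▸ hc).intervalIntegrable
  have hc1 : ContinuousOn (fun r => V r ^ 2 * r ^ (1 - a)) (Set.Icc 0 ρ) :=
    (hVc.pow 2).mul (hrc _ h1a)
  have hc2 : ContinuousOn (fun r => 2 * V r * g r * r ^ (2 - a)) (Set.Icc 0 ρ) :=
    (((continuousOn_const.mul hVc).mul hgc)).mul (hrc _ h2a)
  have hc3 : ContinuousOn (fun r => g r ^ 2 * r ^ (3 - a)) (Set.Icc 0 ρ) :=
    (hgc.pow 2).mul (hrc _ h3a)
  set I := ∫ r in (0:ℝ)..ρ, V r ^ 2 * r ^ (1 - a) with hI_def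
  set J := ∫ r in (0:ℝ)..ρ, g r ^ 2 * r ^ (3 - a) with hJ_def
  -- derivative of F r = V r ^ 2 * r ^ (2 - a)
  have hF' : ∀ r ∈ Set.Ioo 0 ρ,
      HasDerivAt (fun r => V r ^ 2 * r ^ (2 - a))
        (2 * V r * g r * r ^ (2 - a) + (2 - a) * (V r ^ 2 * r ^ (1 - a))) r := by
    intro r hr
    have h1 : HasDerivAt (fun r => V r ^ 2) (2 * V r * g r) r := by
      have := ((hd r hr).sub_const (U ρ)).fun_pow 2
      simpa [hV_def] using this
    have h2 : HasDerivAt (fun r : ℝ => r ^ (2 - a)) ((2 - a) * r ^ (2 - a - 1)) r :=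
      Real.hasDerivAt_rpow_const (Or.inl (ne_of_gt hr.1))
    rw [show (2:ℝ) - a - 1 = 1 - a by ring] at h2
    have := h1.fun_mul h2
    refine this.congr_deriv ?_
    ring
  have hFTC : (∫ r in (0:ℝ)..ρ,
      (2 * V r * g r * r ^ (2 - a) + (2 - a) * (V r ^ 2 * r ^ (1 - a)))) = 0 := by
    rw [intervalIntegral.integral_eq_sub_of_hasDeriv_right_of_le hρ.le
      ((hVc.pow 2).mul (hrc _ h2a))
      (fun x hx => (hF' x hx).hasDerivWithinAt)
      (hint _ (hc2.add (continuousOn_const.mul hc1)))]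
    simp [hV_def, Real.zero_rpow (ne_of_gt h2a)]
  have hsplit : (∫ r in (0:ℝ)..ρ, 2 * V r * g r * r ^ (2 - a)) + (2 - a) * I = 0 := by
    rw [hI_def, ← intervalIntegral.integral_const_mul,
      ← intervalIntegral.integral_add (hint _ hc2) (hint _ (continuousOn_const.fun_mul hc1))]
    exact hFTC
  -- pointwise AM-GM bound
  have hpt : ∀ r ∈ Set.Icc (0:ℝ) ρ,
      -(2 * V r * g r * r ^ (2 - a)) ≤
        ((2 - a) / 2) * (V r ^ 2 * r ^ (1 - a)) + (2 / (2 - a)) * (g r ^ 2 * r ^ (3 - a)) := by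
    intro r hr
    have hr0 : (0:ℝ) ≤ r := hr.1
    set A := V r * r ^ ((1 - a) / 2) with hA
    set B := g r * r ^ ((3 - a) / 2) with hB
    have hA2 : A ^ 2 = V r ^ 2 * r ^ (1 - a) := by
      rw [hA, mul_pow, ← Real.rpow_natCast (r ^ ((1 - a)/2)) 2,
        ← Real.rpow_mul hr0]
      norm_num
    have hB2 : B ^ 2 = g r ^ 2 * r ^ (3 - a) := by
      rw [hB, mul_pow, ← Real.rpow_natCast (r ^ ((3 - a)/2)) 2,
        ← Real.rpow_mul hr0]
      norm_num
    have hAB : r ^ (2 - a) = r ^ ((1 - a)/2) * r ^ ((3 - a)/2) := by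
      rw [show (2:ℝ) - a = (1 - a)/2 + (3 - a)/2 by ring,
        Real.rpow_add' hr0 (by intro h; nlinarith)]
    rw [← hA2, ← hB2, hAB]
    have h1 : -(2 * V r * g r * (r ^ ((1 - a)/2) * r ^ ((3 - a)/2))) = -(2 * A * B) := by
      rw [hA, hB]; ring
    rw [h1, ← sub_nonneg]
    have hkey : (2 - a) / 2 * A ^ 2 + 2 / (2 - a) * B ^ 2 - -(2 * A * B) =
        ((2 - a) * A + 2 * B) ^ 2 / (2 * (2 - a)) := by
      field_simp
      ring
    rw [hkey]
    positivity
  have hmono : (∫ r in (0:ℝ)..ρ, -(2 * V r * g r * r ^ (2 - a))) ≤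
      ∫ r in (0:ℝ)..ρ,
        (((2 - a) / 2) * (V r ^ 2 * r ^ (1 - a)) + (2 / (2 - a)) * (g r ^ 2 * r ^ (3 - a))) :=
    intervalIntegral.integral_mono_on hρ.le (hint _ hc2.neg)
      (hint _ ((continuousOn_const.mul hc1).add (continuousOn_const.mul hc3))) hpt
  rw [intervalIntegral.integral_neg,
    intervalIntegral.integral_add (hint _ (continuousOn_const.fun_mul hc1))
      (hint _ (continuousOn_const.fun_mul hc3)),
    intervalIntegral.integral_const_mul, intervalIntegral.integral_const_mul] at hmono
  -- hmono : -(∫ 2Vg r^{2-a}) ≤ (2-a)/2 * I + 2/(2-a) * J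
  have hIJ : I ≤ (4 / (2 - a) ^ 2) * J := by
    have h6 : (2 - a) * I / 2 ≤ 2 / (2 - a) * J := by linarith
    have h7 : (2 - a) * ((2 - a) * I / 2) ≤ (2 - a) * (2 / (2 - a) * J) :=
      mul_le_mul_of_nonneg_left h6 h2a.le
    rw [show (2 - a) * (2 / (2 - a) * J) = 2 * J by field_simp] at h7
    rw [div_mul_eq_mul_div, le_div_iff₀ (by positivity)]
    nlinarith [h7]
  -- identify J with the RHS integral
  have hJR : (∫ r in (0:ℝ)..ρ, deriv U r ^ 2 * r ^ (3 - a)) = J := by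
    rw [hJ_def]
    apply intervalIntegral.integral_congr_ae
    have hne : ∀ᵐ x : ℝ, x ≠ ρ := by
      refine (MeasureTheory.ae_iff).mpr ?_
      simpa using measure_singleton ρ
    filter_upwards [hne] with x hx hxI
    rw [Set.uIoc_of_le hρ.le] at hxI
    have hxo : x ∈ Set.Ioo 0 ρ := ⟨hxI.1, lt_of_le_of_ne hxI.2 hx⟩
    rw [(hd x hxo).deriv]
  rw [hJR]
  exact hIJ
end

section
/- Let a < 0 and let f : [a, 0] → ℝ be continuously differentiable. Then ∫_a^0 (f(u) − f(a))² · (−u) du ≤ (a²/2) · ∫_a^0 f′(u)² · (−u) du. -/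
open MeasureTheory Real intervalIntegral

/-- Cauchy–Schwarz for interval integrals of continuous functions. -/
lemma interval_cauchy_schwarz_sq (a b : ℝ) (hab : a ≤ b) (g : ℝ → ℝ)
    (hg : ContinuousOn g (Set.Icc a b)) :
    (∫ s in a..b, g s) ^ 2 ≤ (b - a) * ∫ s in a..b, g s ^ 2 := by
  have hgi : IntervalIntegrable g volume a b :=
    (hg.mono (by rw [Set.uIcc_of_le hab])).intervalIntegrable
  have hg2i : IntervalIntegrable (fun s => g s ^ 2) volume a b :=
    ((hg.pow 2).mono (by rw [Set.uIcc_of_le hab])).intervalIntegrable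
  set A := ∫ s in a..b, g s with hA
  set B := ∫ s in a..b, g s ^ 2 with hB
  have key : 0 ≤ (b - a) ^ 2 * B - 2 * (b - a) * A * A + A ^ 2 * (b - a) := by
    have h0 : 0 ≤ ∫ s in a..b, ((b - a) * g s - A) ^ 2 := by
      apply intervalIntegral.integral_nonneg hab
      intro u _; positivity
    have hexp : (∫ s in a..b, ((b - a) * g s - A) ^ 2)
        = (b - a) ^ 2 * B - 2 * (b - a) * A * A + A ^ 2 * (b - a) := by
      have : ∀ s, ((b - a) * g s - A) ^ 2
          = (b - a) ^ 2 * g s ^ 2 - 2 * (b - a) * A * g s + A ^ 2 := by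
        intro s; ring
      rw [intervalIntegral.integral_congr (fun s _ => this s)]
      rw [intervalIntegral.integral_add (((hg2i.const_mul _).sub (hgi.const_mul _)))
        intervalIntegrable_const,
        intervalIntegral.integral_sub (hg2i.const_mul _) (hgi.const_mul _),
        intervalIntegral.integral_const_mul, intervalIntegral.integral_const_mul,
        intervalIntegral.integral_const, smul_eq_mul, ← hA, ← hB]
      ring
    linarith [hexp ▸ h0]
  rcases eq_or_lt_of_le hab with h | h
  · simp [← h, hA]
  · nlinarith [key]

/-- Weighted Poincaré inequality along the mantle of the past null cone (estimate (3.33)):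
for `a < 0` and `f` continuously differentiable on `[a, 0]`,
`∫_a^0 (f(u) − f(a))² (−u) du ≤ (a²/2) ∫_a^0 f′(u)² (−u) du`. -/
theorem weighted_poincare_null_cone (a : ℝ) (ha : a < 0) (f : ℝ → ℝ)
    (hf : ContDiffOn ℝ 1 f (Set.Icc a 0)) :
    ∫ u in a..(0 : ℝ), (f u - f a) ^ 2 * (-u) ≤
      (a ^ 2 / 2) * ∫ u in a..(0 : ℝ), deriv f u ^ 2 * (-u) := by
  have ha0 : a ≤ 0 := ha.le
  set g : ℝ → ℝ := derivWithin f (Set.Icc a 0) with hgdef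
  have hUD : UniqueDiffOn ℝ (Set.Icc a 0) := uniqueDiffOn_Icc ha
  have hgc : ContinuousOn g (Set.Icc a 0) :=
    hf.continuousOn_derivWithin hUD le_rfl
  have hfc : ContinuousOn f (Set.Icc a 0) := hf.continuousOn
  -- derivative at interior points
  have hder : ∀ x ∈ Set.Ioo a 0, HasDerivAt f (g x) x := by
    intro x hx
    have hd : DifferentiableWithinAt ℝ f (Set.Icc a 0) x :=
      (hf.differentiableOn one_ne_zero) x (Set.Ioo_subset_Icc_self hx)
    exact hd.hasDerivWithinAt.hasDerivAt (Icc_mem_nhds hx.1 hx.2)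
  -- FTC
  have hftc : ∀ u ∈ Set.Icc a 0, f u - f a = ∫ s in a..u, g s := by
    intro u hu
    have hIcc : Set.Icc a u ⊆ Set.Icc a 0 := Set.Icc_subset_Icc le_rfl hu.2
    have := intervalIntegral.integral_eq_sub_of_hasDeriv_right_of_le hu.1
      (hfc.mono hIcc)
      (fun x hx => (hder x (Set.Ioo_subset_Ioo le_rfl hu.2 hx)).hasDerivWithinAt)
      (((hgc.mono hIcc).mono (by rw [Set.uIcc_of_le hu.1])).intervalIntegrable)
    linarith [this]
  set I := ∫ s in a..(0:ℝ), g s ^ 2 * (-s) with hIdef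
  have hInonneg : 0 ≤ I := by
    apply intervalIntegral.integral_nonneg ha0
    intro u hu
    have : 0 ≤ -u := by linarith [hu.2]
    positivity
  -- pointwise bound: (f u - f a)^2 * (-u) ≤ (u - a) * I  on Icc a 0
  have hpt : ∀ u ∈ Set.Icc a 0, (f u - f a) ^ 2 * (-u) ≤ (u - a) * I := by
    intro u hu
    have hIcc : Set.Icc a u ⊆ Set.Icc a 0 := Set.Icc_subset_Icc le_rfl hu.2
    have hgcu : ContinuousOn g (Set.Icc a u) := hgc.mono hIcc
    have hCS := interval_cauchy_schwarz_sq a u hu.1 g hgcu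
    have hg2i : IntervalIntegrable (fun s => g s ^ 2) volume a u :=
      ((hgcu.pow 2).mono (by rw [Set.uIcc_of_le hu.1])).intervalIntegrable
    have hg2wi : IntervalIntegrable (fun s => g s ^ 2 * (-s)) volume a u :=
      (((hgcu.pow 2).mul (Continuous.continuousOn continuous_neg)).mono
        (by rw [Set.uIcc_of_le hu.1])).intervalIntegrable
    -- weight step: (-u) * ∫_a^u g^2 ≤ ∫_a^u g^2 (-s)
    have hw : (-u) * ∫ s in a..u, g s ^ 2 ≤ ∫ s in a..u, g s ^ 2 * (-s) := by
      rw [← intervalIntegral.integral_const_mul]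
      apply intervalIntegral.integral_mono_on hu.1 (hg2i.const_mul _) hg2wi
      intro s hs
      have h1 : -u ≤ -s := by linarith [hs.2]
      have h2 : 0 ≤ g s ^ 2 := sq_nonneg _
      calc -u * g s ^ 2 = g s ^ 2 * (-u) := by ring
        _ ≤ g s ^ 2 * (-s) := mul_le_mul_of_nonneg_left h1 h2
    -- tail step: ∫_a^u g^2 (-s) ≤ I
    have htail : (∫ s in a..u, g s ^ 2 * (-s)) ≤ I := by
      have hg2w0 : IntervalIntegrable (fun s => g s ^ 2 * (-s)) volume u 0 :=
        (((hgc.mono (Set.Icc_subset_Icc hu.1 le_rfl)).pow 2).mul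
          (Continuous.continuousOn continuous_neg)
          |>.mono (by rw [Set.uIcc_of_le hu.2]) |>.intervalIntegrable)
      have hsplit : I = (∫ s in a..u, g s ^ 2 * (-s)) + ∫ s in u..(0:ℝ), g s ^ 2 * (-s) :=
        (intervalIntegral.integral_add_adjacent_intervals hg2wi hg2w0).symm
      have htl : 0 ≤ ∫ s in u..(0:ℝ), g s ^ 2 * (-s) := by
        apply intervalIntegral.integral_nonneg hu.2
        intro s hs
        have : 0 ≤ -s := by linarith [hs.2]
        positivity
      linarith
    have hunneg : 0 ≤ -u := by linarith [hu.2]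
    have huma : 0 ≤ u - a := by linarith [hu.1]
    calc (f u - f a) ^ 2 * (-u) = (∫ s in a..u, g s) ^ 2 * (-u) := by rw [hftc u hu]
      _ ≤ ((u - a) * ∫ s in a..u, g s ^ 2) * (-u) := mul_le_mul_of_nonneg_right hCS hunneg
      _ = (u - a) * ((-u) * ∫ s in a..u, g s ^ 2) := by ring
      _ ≤ (u - a) * ∫ s in a..u, g s ^ 2 * (-s) := mul_le_mul_of_nonneg_left hw huma
      _ ≤ (u - a) * I := mul_le_mul_of_nonneg_left htail huma
  -- integrate the pointwise bound
  have hLHSi : IntervalIntegrable (fun u => (f u - f a) ^ 2 * (-u)) volume a 0 :=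
    ((((hfc.sub continuousOn_const).pow 2).mul (Continuous.continuousOn continuous_neg)).mono
      (by rw [Set.uIcc_of_le ha0])).intervalIntegrable
  have hRi : IntervalIntegrable (fun u => (u - a) * I) volume a 0 :=
    ((continuous_id.sub continuous_const).mul continuous_const).intervalIntegrable a 0
  have hmain : (∫ u in a..(0:ℝ), (f u - f a) ^ 2 * (-u)) ≤ ∫ u in a..(0:ℝ), (u - a) * I := by
    apply intervalIntegral.integral_mono_on ha0 hLHSi hRi hpt
  have hlin : (∫ u in a..(0:ℝ), (u - a) * I) = (a ^ 2 / 2) * I := by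
    have : (∫ u in a..(0:ℝ), (u - a) * I) = (∫ u in a..(0:ℝ), (u - a)) * I := by
      rw [← intervalIntegral.integral_mul_const]
    rw [this]
    have h1 : (∫ u in a..(0:ℝ), (u - a)) = a ^ 2 / 2 := by
      rw [intervalIntegral.integral_sub intervalIntegrable_id intervalIntegrable_const,
        integral_id, intervalIntegral.integral_const]
      simp
      ring
    rw [h1]
  -- identify RHS integral with I
  have hcongr : (∫ u in a..(0:ℝ), deriv f u ^ 2 * (-u)) = I := by
    apply intervalIntegral.integral_congr_ae
    have h0 : ∀ᵐ u : ℝ, u ≠ 0 := by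
      rw [MeasureTheory.ae_iff]; set_option linter.unnecessarySimpa false in
      simpa using measure_singleton (α := ℝ) (μ := volume) 0
    filter_upwards [h0] with u hu hmem
    rw [Set.uIoc_of_le ha0] at hmem
    have huo : u ∈ Set.Ioo a 0 := ⟨hmem.1, lt_of_le_of_ne hmem.2 hu⟩
    have : deriv f u = g u := (hder u huo).deriv
    rw [this]
  rw [hcongr]
  calc (∫ u in a..(0:ℝ), (f u - f a) ^ 2 * (-u)) ≤ ∫ u in a..(0:ℝ), (u - a) * I := hmain
    _ = (a ^ 2 / 2) * I := hlin
end

section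
/- For all real numbers T, a, b, c with a > 0, b ≥ 0, c ≥ 0, |a − b| ≤ c ≤ a + b, and a + b < T, one has 0 ≤ 1/√(T² − c²) − 1/√((T + a)² − b²) ≤ 8 · a / ( √(T + a + b) · (T + a − b) · √(T − a − b) ). -/
/-!
Write `x = T² − c²` and `y = (T + a)² − b²`. The triangle inequalities give
`(a − b)² ≤ c² ≤ (a + b)²`, whence `x ≤ y`, `y − x ≤ 2a(T + a + b)` and
`x ≥ (T − a − b)(T + a + b)`, while `y = (T + a − b)(T + a + b)`. Rationalising,
`1/√x − 1/√y = (y − x)/(√x √y (√x + √y)) ≤ (y − x)/(√x y)`, and inserting the three bounds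
gives the estimate even with the constant `2` in place of `8`.
-/

open Real

lemma one_div_sqrt_sub_one_div_sqrt_le {x y : ℝ} (hx : 0 < x) (hxy : x ≤ y) :
    1 / √x - 1 / √y ≤ (y - x) / (√x * y) := by
  have hu : 0 < √x := sqrt_pos.2 hx
  have huw : √x ≤ √y := sqrt_le_sqrt hxy
  have hw : 0 < √y := hu.trans_le huw
  have hx2 := sq_sqrt hx.le
  have hy2 := sq_sqrt (hx.le.trans hxy)
  generalize √x = u at *
  generalize √y = w at *
  subst hx2 hy2
  rw [div_sub_div _ _ hu.ne' hw.ne', one_mul, mul_one, div_le_div_iff₀ (by positivity) (by positivity)]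
  nlinarith [mul_nonneg (mul_nonneg (sub_nonneg.2 huw) (sq_nonneg u)) hw.le]

theorem kernel_difference_estimate_general (T a b c : ℝ) (ha : 0 < a) (hc : 0 ≤ c)
    (h₁ : |a - b| ≤ c) (h₂ : c ≤ a + b) (hT : a + b < T) :
    0 ≤ 1 / Real.sqrt (T ^ 2 - c ^ 2) - 1 / Real.sqrt ((T + a) ^ 2 - b ^ 2) ∧
      1 / Real.sqrt (T ^ 2 - c ^ 2) - 1 / Real.sqrt ((T + a) ^ 2 - b ^ 2) ≤
        8 * a / (Real.sqrt (T + a + b) * (T + a - b) * Real.sqrt (T - a - b)) := by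
  have hlow : (a - b) ^ 2 ≤ c ^ 2 := sq_abs (a - b) ▸ pow_le_pow_left₀ (abs_nonneg _) h₁ 2
  have hup : c ^ 2 ≤ (a + b) ^ 2 := pow_le_pow_left₀ hc h₂ 2
  have hp : 0 < T - a - b := by linarith
  have hq : 0 < T + a + b := by linarith
  have hr : 0 < T + a - b := by linarith
  have hx : (T - a - b) * (T + a + b) ≤ T ^ 2 - c ^ 2 := by nlinarith
  have hxpos : 0 < T ^ 2 - c ^ 2 := (mul_pos hp hq).trans_le hx
  have hxy : T ^ 2 - c ^ 2 ≤ (T + a) ^ 2 - b ^ 2 := by nlinarith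
  have hyx : (T + a) ^ 2 - b ^ 2 - (T ^ 2 - c ^ 2) ≤ 2 * a * (T + a + b) := by nlinarith
  have hy : (T + a) ^ 2 - b ^ 2 = (T + a - b) * (T + a + b) := by ring
  refine ⟨sub_nonneg.2 (one_div_le_one_div_of_le (sqrt_pos.2 hxpos) (sqrt_le_sqrt hxy)), ?_⟩
  calc 1 / √(T ^ 2 - c ^ 2) - 1 / √((T + a) ^ 2 - b ^ 2)
      ≤ ((T + a) ^ 2 - b ^ 2 - (T ^ 2 - c ^ 2)) / (√(T ^ 2 - c ^ 2) * ((T + a) ^ 2 - b ^ 2)) :=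
        one_div_sqrt_sub_one_div_sqrt_le hxpos hxy
    _ ≤ 2 * a * (T + a + b) / (√((T - a - b) * (T + a + b)) * ((T + a - b) * (T + a + b))) := by
        rw [hy]
        gcongr
        rw [← hy]; linarith
    _ = 2 * a / (√(T + a + b) * (T + a - b) * √(T - a - b)) := by
        rw [sqrt_mul hp.le]
        field_simp
    _ ≤ 8 * a / (√(T + a + b) * (T + a - b) * √(T - a - b)) := by
        gcongr; linarith

/-- Kernel difference estimate from the proof of Lemma 5.3 (term III_A): for `a > 0`,
`b, c ≥ 0` with `|a − b| ≤ c ≤ a + b` and `a + b < T`,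
`0 ≤ 1/√(T² − c²) − 1/√((T + a)² − b²) ≤ 8a/(√(T + a + b) (T + a − b) √(T − a − b))`. -/
theorem kernel_difference_estimate (T a b c : ℝ) (ha : 0 < a) (hb : 0 ≤ b) (hc : 0 ≤ c)
    (h₁ : |a - b| ≤ c) (h₂ : c ≤ a + b) (hT : a + b < T) :
    0 ≤ 1 / Real.sqrt (T ^ 2 - c ^ 2) - 1 / Real.sqrt ((T + a) ^ 2 - b ^ 2) ∧
      1 / Real.sqrt (T ^ 2 - c ^ 2) - 1 / Real.sqrt ((T + a) ^ 2 - b ^ 2) ≤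
        8 * a / (Real.sqrt (T + a + b) * (T + a - b) * Real.sqrt (T - a - b)) :=
  kernel_difference_estimate_general T a b c ha hc h₁ h₂ hT
end

section
/- For all real numbers a, b with 0 < b < a, one has ∫₀^{√(b/a)} (b − a z²)^(−1/2) · (1 − z²)^(−1/2) dz ≤ 4 · a^(−1/4) · b^(−1/8) · (√a + √b)^(1/4) · (a − b)^(−1/4). -/
open MeasureTheory Real intervalIntegral

/-- Elliptic-type integral bound from the proof of Lemma 5.3 (term III_B^(1)): for
`0 < b < a`, `∫₀^{√(b/a)} (b − az²)^(−1/2) (1 − z²)^(−1/2) dz ≤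
4 a^(−1/4) b^(−1/8) (√a + √b)^(1/4) (a − b)^(−1/4)`. -/
theorem elliptic_integral_bound (a b : ℝ) (hb : 0 < b) (hba : b < a) :
    ∫ z in (0 : ℝ)..Real.sqrt (b / a),
        (b - a * z ^ 2) ^ (-(1 : ℝ) / 2) * (1 - z ^ 2) ^ (-(1 : ℝ) / 2) ≤
      4 * a ^ (-(1 : ℝ) / 4) * b ^ (-(1 : ℝ) / 8) *
        (Real.sqrt a + Real.sqrt b) ^ ((1 : ℝ) / 4) * (a - b) ^ (-(1 : ℝ) / 4) := by
  have ha : 0 < a := hb.trans hba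
  set c := Real.sqrt (b / a) with hcdef
  have hc0 : 0 < c := Real.sqrt_pos.2 (div_pos hb ha)
  have hc2 : a * c ^ 2 = b := by
    rw [hcdef, Real.sq_sqrt (div_pos hb ha).le]
    field_simp
  have hc1 : c < 1 := by
    rw [hcdef, show (1:ℝ) = Real.sqrt 1 by simp]
    exact Real.sqrt_lt_sqrt (div_pos hb ha).le (by rw [div_lt_one ha]; exact hba)
  have h1c0 : (0:ℝ) < 1 - c := by linarith
  set K : ℝ := (a * c) ^ (-(1:ℝ)/2) * (1 - c) ^ (-(1:ℝ)/4) with hKdef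
  have hK0 : 0 ≤ K :=
    mul_nonneg (Real.rpow_nonneg (by positivity) _) (Real.rpow_nonneg h1c0.le _)
  -- pointwise bound on [0, c]
  have key : ∀ z ∈ Set.Icc (0:ℝ) c,
      (b - a * z ^ 2) ^ (-(1:ℝ)/2) * (1 - z ^ 2) ^ (-(1:ℝ)/2)
        ≤ K * (c - z) ^ (-(3:ℝ)/4) := by
    rintro z ⟨hz0, hzc⟩
    rcases eq_or_lt_of_le hzc with heq | hzc
    · rw [heq, show b - a * c ^ 2 = 0 by linarith [hc2], sub_self, Real.zero_rpow (by norm_num : (-(1:ℝ)/2) ≠ 0),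
        Real.zero_rpow (by norm_num : (-(3:ℝ)/4) ≠ 0), zero_mul, mul_zero]
    · have hcz : 0 < c - z := by linarith
      have hz1 : z < 1 := hzc.trans hc1
      have h1 : (b - a * z ^ 2) ^ (-(1:ℝ)/2) ≤ (a * c * (c - z)) ^ (-(1:ℝ)/2) := by
        apply Real.rpow_le_rpow_of_nonpos (by positivity) _ (by norm_num)
        nlinarith [hc2, mul_nonneg (mul_nonneg ha.le hcz.le) hz0]
      have hu : (0:ℝ) < (c - z) * (1 - c) := by nlinarith
      have h2 : (1 - z ^ 2) ^ (-(1:ℝ)/2) ≤ ((c - z) * (1 - c)) ^ (-(1:ℝ)/4) := by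
        have hsq : ((c - z) * (1 - c)) ^ ((1:ℝ)/2) ≤ 1 - z ^ 2 := by
          rw [← Real.sqrt_eq_rpow]
          calc Real.sqrt ((c - z) * (1 - c)) ≤ Real.sqrt ((1 - z) ^ 2) := by
                apply Real.sqrt_le_sqrt; nlinarith
            _ = 1 - z := by rw [Real.sqrt_sq (by linarith)]
            _ ≤ 1 - z ^ 2 := by nlinarith
        calc (1 - z ^ 2) ^ (-(1:ℝ)/2)
            ≤ (((c - z) * (1 - c)) ^ ((1:ℝ)/2)) ^ (-(1:ℝ)/2) :=
              Real.rpow_le_rpow_of_nonpos (by positivity) hsq (by norm_num)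
          _ = ((c - z) * (1 - c)) ^ (-(1:ℝ)/4) := by
              rw [← Real.rpow_mul hu.le]; norm_num
      calc (b - a * z ^ 2) ^ (-(1:ℝ)/2) * (1 - z ^ 2) ^ (-(1:ℝ)/2)
          ≤ (a * c * (c - z)) ^ (-(1:ℝ)/2) * ((c - z) * (1 - c)) ^ (-(1:ℝ)/4) := by
            apply mul_le_mul h1 h2 (Real.rpow_nonneg (by nlinarith) _)
              (Real.rpow_nonneg (by positivity) _)
        _ = K * (c - z) ^ (-(3:ℝ)/4) := by
            rw [Real.mul_rpow (by positivity) hcz.le, Real.mul_rpow hcz.le (by linarith), hKdef]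
            rw [show (a * c) ^ (-(1:ℝ)/2) * (c - z) ^ (-(1:ℝ)/2) *
                ((c - z) ^ (-(1:ℝ)/4) * (1 - c) ^ (-(1:ℝ)/4))
              = (a * c) ^ (-(1:ℝ)/2) * (1 - c) ^ (-(1:ℝ)/4) *
                ((c - z) ^ (-(1:ℝ)/2) * (c - z) ^ (-(1:ℝ)/4)) by ring]
            rw [← Real.rpow_add hcz]
            norm_num
  -- integrability of the majorant
  have hgint : IntervalIntegrable (fun z => (c - z) ^ (-(3:ℝ)/4)) volume 0 c := by
    have h := (intervalIntegral.intervalIntegrable_rpow' (a := 0) (b := c)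
      (r := -(3:ℝ)/4) (by norm_num)).comp_sub_left c
    simpa using h.symm
  have hGint : IntervalIntegrable (fun z => K * (c - z) ^ (-(3:ℝ)/4)) volume 0 c :=
    hgint.const_mul K
  -- measurability / integrability of the integrand
  have hfmeas : AEStronglyMeasurable
      (fun z => (b - a * z ^ 2) ^ (-(1:ℝ)/2) * (1 - z ^ 2) ^ (-(1:ℝ)/2))
      (volume.restrict (Set.uIoc (0:ℝ) c)) := by
    apply Measurable.aestronglyMeasurable
    fun_prop
  have hfint : IntervalIntegrable
      (fun z => (b - a * z ^ 2) ^ (-(1:ℝ)/2) * (1 - z ^ 2) ^ (-(1:ℝ)/2)) volume 0 c := by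
    apply hGint.mono_fun' hfmeas
    rw [Set.uIoc_of_le hc0.le]
    filter_upwards [ae_restrict_mem measurableSet_Ioc] with z hz
    have hz' : z ∈ Set.Icc (0:ℝ) c := Set.Ioc_subset_Icc_self hz
    have hbz : (0:ℝ) ≤ b - a * z ^ 2 := by
      have h1 := hz'.1; have h2 := hz'.2
      have hz2 : z ^ 2 ≤ c ^ 2 := by nlinarith
      nlinarith [mul_le_mul_of_nonneg_left hz2 ha.le]
    have hzz : (0:ℝ) ≤ 1 - z ^ 2 := by
      have h1 := hz'.1
      have h2 : z < 1 := lt_of_le_of_lt hz'.2 hc1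
      nlinarith
    have hnn : 0 ≤ (b - a * z ^ 2) ^ (-(1:ℝ)/2) * (1 - z ^ 2) ^ (-(1:ℝ)/2) :=
      mul_nonneg (Real.rpow_nonneg hbz _) (Real.rpow_nonneg hzz _)
    rw [Real.norm_eq_abs, abs_of_nonneg hnn]
    exact key z hz'
  -- value of the majorant integral
  have hgval : ∫ z in (0:ℝ)..c, (c - z) ^ (-(3:ℝ)/4) = 4 * c ^ ((1:ℝ)/4) := by
    rw [show (fun z => (c - z) ^ (-(3:ℝ)/4)) = fun z => ((c - z) ^ (-(3:ℝ)/4)) from rfl]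
    rw [intervalIntegral.integral_comp_sub_left (fun u => u ^ (-(3:ℝ)/4)) c]
    simp only [sub_self, sub_zero]
    rw [integral_rpow (Or.inl (by norm_num))]
    rw [show -(3:ℝ)/4 + 1 = 1/4 by norm_num, Real.zero_rpow (by norm_num : (1:ℝ)/4 ≠ 0)]
    ring
  have step : ∫ z in (0:ℝ)..c,
      (b - a * z ^ 2) ^ (-(1:ℝ)/2) * (1 - z ^ 2) ^ (-(1:ℝ)/2)
      ≤ K * (4 * c ^ ((1:ℝ)/4)) := by
    calc _ ≤ ∫ z in (0:ℝ)..c, K * (c - z) ^ (-(3:ℝ)/4) :=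
          intervalIntegral.integral_mono_on hc0.le hfint hGint key
      _ = K * (4 * c ^ ((1:ℝ)/4)) := by
          rw [intervalIntegral.integral_const_mul, hgval]
  refine step.trans (le_of_eq ?_)
  -- algebraic identity
  set s := Real.sqrt a with hsdef
  set t := Real.sqrt b with htdef
  have hs0 : 0 < s := Real.sqrt_pos.2 ha
  have ht0 : 0 < t := Real.sqrt_pos.2 hb
  have hts : t < s := Real.sqrt_lt_sqrt hb.le hba
  have hcst : c = t / s := by rw [hcdef, Real.sqrt_div hb.le]
  have has : a = s ^ 2 := (Real.sq_sqrt ha.le).symm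
  have hbt : b = t ^ 2 := (Real.sq_sqrt hb.le).symm
  have hac : a * c = s * t := by
    rw [hcst, has]; field_simp
  have h1c : 1 - c = (s - t) / s := by
    rw [hcst]; field_simp
  have hab : a - b = (s - t) * (s + t) := by rw [has, hbt]; ring
  rw [hKdef, hac, h1c, hcst, hab, has, hbt]
  rw [Real.mul_rpow hs0.le ht0.le,
      Real.div_rpow (by linarith) hs0.le,
      Real.div_rpow ht0.le hs0.le,
      Real.mul_rpow (by linarith) (by positivity),
      ← Real.rpow_natCast s 2, ← Real.rpow_natCast t 2,
      ← Real.rpow_mul hs0.le, ← Real.rpow_mul ht0.le]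
  rw [show ((2:ℕ):ℝ) * (-(1:ℝ)/4) = -(1:ℝ)/2 by norm_num,
      show ((2:ℕ):ℝ) * (-(1:ℝ)/8) = -(1:ℝ)/4 by norm_num]
  have hst0 : (0:ℝ) < s - t := by linarith
  have hspt : (0:ℝ) < s + t := by linarith
  calc s ^ (-(1:ℝ)/2) * t ^ (-(1:ℝ)/2) * ((s - t) ^ (-(1:ℝ)/4) / s ^ (-(1:ℝ)/4)) *
        (4 * (t ^ ((1:ℝ)/4) / s ^ ((1:ℝ)/4)))
      = 4 * (t ^ (-(1:ℝ)/2) * t ^ ((1:ℝ)/4)) *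
          (s ^ (-(1:ℝ)/2) / s ^ (-(1:ℝ)/4) / s ^ ((1:ℝ)/4)) * (s - t) ^ (-(1:ℝ)/4) := by
        ring
    _ = 4 * t ^ (-(1:ℝ)/4) * s ^ (-(1:ℝ)/2) * (s - t) ^ (-(1:ℝ)/4) := by
        rw [← Real.rpow_add ht0, ← Real.rpow_sub hs0, ← Real.rpow_sub hs0]
        norm_num
    _ = 4 * s ^ (-(1:ℝ)/2) * t ^ (-(1:ℝ)/4) * (s + t) ^ ((1:ℝ)/4) *
          ((s - t) ^ (-(1:ℝ)/4) * (s + t) ^ (-(1:ℝ)/4)) := by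
        rw [show 4 * s ^ (-(1:ℝ)/2) * t ^ (-(1:ℝ)/4) * (s + t) ^ ((1:ℝ)/4) *
            ((s - t) ^ (-(1:ℝ)/4) * (s + t) ^ (-(1:ℝ)/4))
          = 4 * t ^ (-(1:ℝ)/4) * s ^ (-(1:ℝ)/2) * (s - t) ^ (-(1:ℝ)/4) *
            ((s + t) ^ ((1:ℝ)/4) * (s + t) ^ (-(1:ℝ)/4)) by ring]
        rw [← Real.rpow_add hspt]
        norm_num
end

section
/- For all real numbers a, b with 0 < b < a, one has ∫₀^{2·arcsin(√(b/a))} (b − a·sin²(φ/2))^(−1/2) dφ ≤ 8 · a^(−1/4) · b^(−1/8) · (√a + √b)^(1/4) · (a − b)^(−1/4). -/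
open MeasureTheory Real intervalIntegral

set_option maxHeartbeats 1000000 in
/-- Angular integral estimate from the proof of Lemma 5.3 (term III_B^(1)): for `0 < b < a`,
`∫₀^{2 arcsin √(b/a)} (b − a sin²(φ/2))^(−1/2) dφ ≤
8 a^(−1/4) b^(−1/8) (√a + √b)^(1/4) (a − b)^(−1/4)`. -/
theorem angular_integral_bound (a b : ℝ) (hb : 0 < b) (hba : b < a) :
    ∫ φ in (0 : ℝ)..(2 * Real.arcsin (Real.sqrt (b / a))),
        (b - a * Real.sin (φ / 2) ^ 2) ^ (-(1 : ℝ) / 2) ≤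
      8 * a ^ (-(1 : ℝ) / 4) * b ^ (-(1 : ℝ) / 8) *
        (Real.sqrt a + Real.sqrt b) ^ ((1 : ℝ) / 4) * (a - b) ^ (-(1 : ℝ) / 4) := by
  have ha : 0 < a := hb.trans hba
  set x := Real.sqrt (b / a) with hxdef
  have hx0 : 0 < x := Real.sqrt_pos.2 (div_pos hb ha)
  have hx1 : x < 1 := by
    rw [hxdef, show (1:ℝ) = Real.sqrt 1 by simp]
    exact Real.sqrt_lt_sqrt (by positivity) ((div_lt_one ha).2 hba)
  have hxsq : x ^ 2 = b / a := Real.sq_sqrt (le_of_lt (div_pos hb ha))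
  set U := Real.arcsin x with hUdef
  have hU0 : 0 < U := Real.arcsin_pos.2 hx0
  have hUpi : U ≤ π / 2 := Real.arcsin_le_pi_div_two x
  have hpi : 0 < π := Real.pi_pos
  have hsinU : Real.sin U = x := Real.sin_arcsin (by linarith) (le_of_lt hx1)
  have hcosU : Real.cos U = Real.sqrt ((a - b)/a) := by
    rw [hUdef, Real.cos_arcsin]
    congr 1
    rw [hxsq]; field_simp
  have hcos0 : 0 < Real.cos U := by
    rw [hcosU]; exact Real.sqrt_pos.2 (div_pos (by linarith) ha)
  have hprod : a * (Real.sin U * Real.cos U) = Real.sqrt (b * (a - b)) := by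
    rw [hsinU, hcosU, hxdef, ← Real.sqrt_mul (by positivity),
      show b / a * ((a - b) / a) = b * (a - b) / a ^ 2 by ring,
      Real.sqrt_div (by nlinarith), Real.sqrt_sq ha.le]
    field_simp
  set K := Real.sqrt (b * (a - b)) / π with hKdef
  have hK0 : 0 < K := div_pos (Real.sqrt_pos.2 (by nlinarith)) hpi
  have hbeq : b = a * Real.sin U ^ 2 := by rw [hsinU, hxsq]; field_simp
  have hS0 : 0 ≤ Real.sin U := by rw [hsinU]; exact hx0.le
  -- pointwise lower bound for the base
  have key : ∀ φ ∈ Set.Icc (0:ℝ) (2*U), K * (2*U - φ) ≤ b - a * Real.sin (φ/2) ^ 2 := by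
    intro φ hφ
    obtain ⟨h0, h2⟩ := hφ
    have hu0 : 0 ≤ φ/2 := by linarith
    have huU : φ/2 ≤ U := by linarith
    have hsinu0 : 0 ≤ Real.sin (φ/2) :=
      Real.sin_nonneg_of_nonneg_of_le_pi hu0 (by linarith [Real.pi_le_four])
    have hsinuU : Real.sin (φ/2) ≤ Real.sin U :=
      Real.sin_le_sin_of_le_of_le_pi_div_two (by linarith) hUpi (by linarith)
    have hdiff : Real.sin U - Real.sin (φ/2)
        = 2 * Real.sin ((U - φ/2)/2) * Real.cos ((U + φ/2)/2) := Real.sin_sub_sin U (φ/2)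
    have h1 : 2/π * ((U - φ/2)/2) ≤ Real.sin ((U - φ/2)/2) :=
      Real.mul_le_sin (by linarith) (by linarith)
    have h2c : Real.cos U ≤ Real.cos ((U + φ/2)/2) :=
      Real.cos_le_cos_of_nonneg_of_le_pi (by linarith) (by linarith) (by linarith)
    have hlow : 2/π * (U - φ/2) * Real.cos U ≤ Real.sin U - Real.sin (φ/2) := by
      rw [hdiff]
      have := mul_le_mul h1 h2c hcos0.le (Real.sin_nonneg_of_nonneg_of_le_pi (by linarith)
        (by linarith [Real.pi_le_four]))
      nlinarith
    have hsq : 2/π * (U - φ/2) * Real.cos U * Real.sin U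
        ≤ Real.sin U ^ 2 - Real.sin (φ/2) ^ 2 := by
      nlinarith [mul_le_mul_of_nonneg_right hlow hS0,
        mul_nonneg (sub_nonneg.2 hsinuU) hsinu0]
    calc K * (2*U - φ) = a * (2/π * (U - φ/2) * Real.cos U * Real.sin U) := by
          rw [hKdef, ← hprod]; ring
      _ ≤ a * (Real.sin U ^ 2 - Real.sin (φ/2) ^ 2) := by
          exact mul_le_mul_of_nonneg_left hsq ha.le
      _ = b - a * Real.sin (φ/2) ^ 2 := by rw [hbeq]; ring
  have hIcc0 : (0:ℝ) ≤ 2*U := by linarith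
  -- pointwise bound for the integrand
  have hle : ∀ φ ∈ Set.Icc (0:ℝ) (2*U),
      (b - a * Real.sin (φ/2) ^ 2) ^ (-(1:ℝ)/2)
        ≤ K ^ (-(1:ℝ)/2) * (2*U - φ) ^ (-(1:ℝ)/2) := by
    intro φ hφ
    rw [← Real.mul_rpow hK0.le (sub_nonneg.2 hφ.2)]
    rcases eq_or_lt_of_le hφ.2 with heq | hlt
    · rw [heq]
      have hz : b - a * Real.sin ((2*U)/2) ^ 2 = 0 := by
        rw [show (2*U)/2 = U by ring]; rw [hbeq]; ring
      rw [hz, show K * (2*U - 2*U) = 0 by ring, Real.zero_rpow (by norm_num)]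
    · exact Real.rpow_le_rpow_of_nonpos
        (mul_pos hK0 (by linarith)) (key φ hφ) (by norm_num)
  -- integrability of the majorant
  have hint_g : IntervalIntegrable
      (fun φ => K ^ (-(1:ℝ)/2) * (2*U - φ) ^ (-(1:ℝ)/2)) volume 0 (2*U) := by
    have h1 : IntervalIntegrable (fun t : ℝ => t ^ (-(1:ℝ)/2)) volume 0 (2*U) :=
      intervalIntegral.intervalIntegrable_rpow' (by norm_num)
    have h2 := h1.comp_sub_left (2*U)
    simp only [sub_zero, sub_self] at h2
    exact h2.symm.const_mul _
  -- integrability of the integrand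
  have hmeas : AEStronglyMeasurable
      (fun φ : ℝ => (b - a * Real.sin (φ/2) ^ 2) ^ (-(1:ℝ)/2))
      (volume.restrict (Set.uIoc (0:ℝ) (2*U))) := by
    apply Measurable.aestronglyMeasurable
    fun_prop
  have hint_f : IntervalIntegrable
      (fun φ : ℝ => (b - a * Real.sin (φ/2) ^ 2) ^ (-(1:ℝ)/2)) volume 0 (2*U) := by
    apply hint_g.mono_fun hmeas
    rw [Set.uIoc_of_le hIcc0]
    filter_upwards [ae_restrict_mem measurableSet_Ioc] with φ hφ
    have hmem : φ ∈ Set.Icc (0:ℝ) (2*U) := ⟨hφ.1.le, hφ.2⟩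
    have h1 := hle φ hmem
    have hbase : 0 ≤ b - a * Real.sin (φ/2) ^ 2 :=
      le_trans (mul_nonneg hK0.le (by linarith [hmem.2])) (key φ hmem)
    have hf0 : 0 ≤ (b - a * Real.sin (φ/2) ^ 2) ^ (-(1:ℝ)/2) := Real.rpow_nonneg hbase _
    have hg0 : 0 ≤ K ^ (-(1:ℝ)/2) * (2*U - φ) ^ (-(1:ℝ)/2) :=
      mul_nonneg (Real.rpow_nonneg hK0.le _) (Real.rpow_nonneg (by linarith [hmem.2]) _)
    simpa [Real.norm_of_nonneg hf0, Real.norm_of_nonneg hg0] using h1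
  -- compare integrals
  have hmono := intervalIntegral.integral_mono_on hIcc0 hint_f hint_g hle
  -- compute the majorant integral
  have hcalc : (∫ φ in (0:ℝ)..(2*U), K ^ (-(1:ℝ)/2) * (2*U - φ) ^ (-(1:ℝ)/2))
      = K ^ (-(1:ℝ)/2) * (2 * (2*U) ^ ((1:ℝ)/2)) := by
    rw [intervalIntegral.integral_const_mul]
    congr 1
    rw [intervalIntegral.integral_comp_sub_left (fun t : ℝ => t ^ (-(1:ℝ)/2)) (2*U)]
    simp only [sub_self, sub_zero]
    rw [integral_rpow (Or.inl (by norm_num))]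
    rw [show -(1:ℝ)/2 + 1 = (1:ℝ)/2 by norm_num, Real.zero_rpow (by norm_num)]
    ring
  -- shrink 2U
  have h2U : 2*U ≤ π * x := by
    have h := Real.mul_le_sin (x := U) hU0.le hUpi
    rw [hsinU] at h
    have h' := mul_le_mul_of_nonneg_left h hpi.le
    have heq : π * (2 / π * U) = 2 * U := by field_simp
    linarith
  have hstep : K ^ (-(1:ℝ)/2) * (2 * (2*U) ^ ((1:ℝ)/2))
      ≤ K ^ (-(1:ℝ)/2) * (2 * (π*x) ^ ((1:ℝ)/2)) := by
    have h := Real.rpow_le_rpow (by positivity) h2U (by norm_num : (0:ℝ) ≤ 1/2)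
    have hKe : (0:ℝ) ≤ K ^ (-(1:ℝ)/2) := Real.rpow_nonneg hK0.le _
    exact mul_le_mul_of_nonneg_left (by linarith) hKe
  -- final constant comparison via 4th powers
  have hfinal : K ^ (-(1:ℝ)/2) * (2 * (π*x) ^ ((1:ℝ)/2))
      ≤ 8 * a ^ (-(1:ℝ)/4) * b ^ (-(1:ℝ)/8) *
        (Real.sqrt a + Real.sqrt b) ^ ((1:ℝ)/4) * (a - b) ^ (-(1:ℝ)/4) := by
    have hs0 : 0 < Real.sqrt a + Real.sqrt b := by positivity
    have hR0 : (0:ℝ) ≤ 8 * a ^ (-(1:ℝ)/4) * b ^ (-(1:ℝ)/8) *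
        (Real.sqrt a + Real.sqrt b) ^ ((1:ℝ)/4) * (a - b) ^ (-(1:ℝ)/4) :=
      mul_nonneg (mul_nonneg (mul_nonneg (mul_nonneg (by norm_num)
        (Real.rpow_nonneg ha.le _)) (Real.rpow_nonneg hb.le _))
        (Real.rpow_nonneg (by positivity) _)) (Real.rpow_nonneg (by linarith) _)
    refine le_of_pow_le_pow_left₀ (n := 4) (by norm_num) hR0 ?_
    have pow4 : ∀ (t : ℝ), 0 ≤ t → ∀ e : ℝ, (t ^ e) ^ (4:ℕ) = t ^ (e * 4) := by
      intro t ht e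
      rw [← Real.rpow_natCast (t ^ e) 4, ← Real.rpow_mul ht]
      norm_num
    have hL4 : (K ^ (-(1:ℝ)/2) * (2 * (π*x) ^ ((1:ℝ)/2))) ^ (4:ℕ)
        = (K ^ 2)⁻¹ * (16 * (π*x) ^ 2) := by
      rw [mul_pow, mul_pow, pow4 K hK0.le, pow4 (π*x) (by positivity),
        show -(1:ℝ)/2 * 4 = -2 by norm_num, show (1:ℝ)/2 * 4 = 2 by norm_num,
        Real.rpow_neg hK0.le, show (2:ℝ) = ((2:ℕ):ℝ) by norm_num,
        Real.rpow_natCast, Real.rpow_natCast]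
      norm_num
    have hR4 : (8 * a ^ (-(1:ℝ)/4) * b ^ (-(1:ℝ)/8) *
          (Real.sqrt a + Real.sqrt b) ^ ((1:ℝ)/4) * (a - b) ^ (-(1:ℝ)/4)) ^ (4:ℕ)
        = 4096 * a⁻¹ * (Real.sqrt b)⁻¹ * (Real.sqrt a + Real.sqrt b) * (a - b)⁻¹ := by
      rw [mul_pow, mul_pow, mul_pow, mul_pow,
        pow4 a ha.le, pow4 b hb.le, pow4 _ hs0.le, pow4 (a-b) (by linarith),
        show -(1:ℝ)/4 * 4 = -1 by norm_num, show -(1:ℝ)/8 * 4 = -(1/2) by norm_num,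
        show (1:ℝ)/4 * 4 = 1 by norm_num,
        Real.rpow_neg_one, Real.rpow_neg_one, Real.rpow_one,
        Real.rpow_neg hb.le, ← Real.sqrt_eq_rpow]
      norm_num
    rw [hL4, hR4]
    have hK2 : K ^ 2 = b * (a - b) / π ^ 2 := by
      rw [hKdef, div_pow, Real.sq_sqrt (by nlinarith)]
    have hsb : Real.sqrt b ^ 2 = b := Real.sq_sqrt hb.le
    have hsb0 : 0 < Real.sqrt b := Real.sqrt_pos.2 hb
    have hsa0 : 0 ≤ Real.sqrt a := Real.sqrt_nonneg a
    have hpx : (π * x) ^ 2 = π ^ 2 * (b / a) := by rw [mul_pow, hxsq]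
    rw [hK2, hpx]
    have hab : (0:ℝ) < a - b := by linarith
    have hEL : (b * (a - b) / π ^ 2)⁻¹ * (16 * (π ^ 2 * (b / a)))
        = 16 * π ^ 4 / (a * (a - b)) := by
      field_simp
    have hER : 4096 * a⁻¹ * (Real.sqrt b)⁻¹ * (Real.sqrt a + Real.sqrt b) * (a - b)⁻¹
        = 4096 * (Real.sqrt a + Real.sqrt b) / (a * Real.sqrt b * (a - b)) := by
      field_simp
    rw [hEL, hER, div_le_div_iff₀ (by positivity) (by positivity)]
    have hπ : π < 3.15 := Real.pi_lt_d2
    have hπ4 : π ^ 4 ≤ 3.15 ^ 4 := pow_le_pow_left₀ hpi.le hπ.le 4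
    have hP : (0:ℝ) < a * (a - b) := by positivity
    have h1 : 16 * π ^ 4 ≤ 4096 := by nlinarith [hπ4]
    calc 16 * π ^ 4 * (a * Real.sqrt b * (a - b))
        = (16 * π ^ 4) * (Real.sqrt b * (a * (a - b))) := by ring
      _ ≤ 4096 * (Real.sqrt b * (a * (a - b))) :=
          mul_le_mul_of_nonneg_right h1 (mul_nonneg hsb0.le hP.le)
      _ ≤ 4096 * ((Real.sqrt a + Real.sqrt b) * (a * (a - b))) := by
          have hsab : Real.sqrt b ≤ Real.sqrt a + Real.sqrt b := by linarith
          exact mul_le_mul_of_nonneg_left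
            (mul_le_mul_of_nonneg_right hsab hP.le) (by norm_num)
      _ = 4096 * (Real.sqrt a + Real.sqrt b) * (a * (a - b)) := by ring
  calc (∫ φ in (0:ℝ)..(2*U), (b - a * Real.sin (φ/2) ^ 2) ^ (-(1:ℝ)/2))
      ≤ ∫ φ in (0:ℝ)..(2*U), K ^ (-(1:ℝ)/2) * (2*U - φ) ^ (-(1:ℝ)/2) := hmono
    _ = K ^ (-(1:ℝ)/2) * (2 * (2*U) ^ ((1:ℝ)/2)) := hcalc
    _ ≤ K ^ (-(1:ℝ)/2) * (2 * (π*x) ^ ((1:ℝ)/2)) := hstep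
    _ ≤ _ := hfinal
end
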